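/- arXiv:2602.20766 — 2 statements merged into one kernel-verified Lean document; each statement's English description precedes it below -/
import Mathlib

section
/- Let d ≥ 1 and let y_1, …, y_d be affinely independent points in ℝ^d, and define f : ℝ^d → ℝ^d by f(z) = (‖z − y_1‖², …, ‖z − y_d‖²). Then there exists a non-empty open subset U ⊆ ℝ^d contained in the image of f such that: (1) for every λ ∈ U, the equation f(z) = λ has exactly two solutions z ∈ ℝ^d; and (2) there exists R > 0 such that U contains the ray {(r, r, …, r) : r > R}. -/
open scoped BigOperators

noncomputable section

namespace RigidityPaper

/-- The squared "norm" `‖x‖² = ∑ i, xᵢ²` on `𝔽^d`. -/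
def sqNorm {𝔽 : Type*} [CommRing 𝔽] {d : ℕ} (x : Fin d → 𝔽) : 𝔽 :=
  ∑ i, x i ^ 2

/-- Two realisations of `G` are equivalent if the corresponding squared edge
lengths agree on every edge. -/
def Equivalent {V 𝔽 : Type*} [CommRing 𝔽] {d : ℕ} (G : SimpleGraph V)
    (p q : V → Fin d → 𝔽) : Prop :=
  ∀ ⦃v w : V⦄, G.Adj v w → sqNorm (p v - p w) = sqNorm (q v - q w)

/-- Two realisations are congruent if they differ by an isometry `x ↦ Ax + b`,
where `AᵀA = 1`. -/
def Congruent {V 𝔽 : Type*} [CommRing 𝔽] {d : ℕ} (p q : V → Fin d → 𝔽) : Prop :=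
  ∃ (A : Matrix (Fin d) (Fin d) 𝔽) (b : Fin d → 𝔽),
    A.transpose * A = 1 ∧ ∀ v, q v = A.mulVec (p v) + b

/-- A realisation is generic if its `d·|V|` coordinates are algebraically
independent over `ℚ`. -/
def IsGeneric {V : Type*} (𝔽 : Type*) [CommRing 𝔽] [Algebra ℚ 𝔽] {d : ℕ}
    (p : V → Fin d → 𝔽) : Prop :=
  AlgebraicIndependent ℚ (fun vi : V × Fin d => p vi.1 vi.2)

/-- The rigidity matrix of `(G,p)`, with one row for each *ordered* edge
(which does not change the rank). -/
def rigidityMatrix {V 𝔽 : Type*} [DecidableEq V] [CommRing 𝔽] {d : ℕ} (G : SimpleGraph V)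
    (p : V → Fin d → 𝔽) :
    Matrix {e : V × V // G.Adj e.1 e.2} (V × Fin d) 𝔽 :=
  fun e vi =>
    if vi.1 = e.1.1 then p e.1.1 vi.2 - p e.1.2 vi.2
    else if vi.1 = e.1.2 then p e.1.2 vi.2 - p e.1.1 vi.2
    else 0

/-- A framework `(G,p)` is infinitesimally rigid if its rigidity matrix has
rank `d·|V| - (d+1 choose 2)`. -/
def IsInfRigid {V : Type*} [Fintype V] [DecidableEq V] {𝔽 : Type*} [Field 𝔽] {d : ℕ}
    (G : SimpleGraph V) (p : V → Fin d → 𝔽) : Prop :=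
  (rigidityMatrix G p).rank = d * Fintype.card V - (d + 1).choose 2

/-- A graph is `d`-rigid if some generic complex realisation is infinitesimally rigid. -/
def IsRigidGraph {V : Type*} [Fintype V] [DecidableEq V] (d : ℕ) (G : SimpleGraph V) : Prop :=
  ∃ p : V → Fin d → ℂ, IsGeneric ℂ p ∧ IsInfRigid G p

/-- A graph is minimally `d`-rigid if it is `d`-rigid and has exactly
`d·|V| - (d+1 choose 2)` edges. -/
def IsMinRigidGraph {V : Type*} [Fintype V] [DecidableEq V] (d : ℕ)
    (G : SimpleGraph V) : Prop :=
  IsRigidGraph d G ∧ G.edgeSet.ncard = d * Fintype.card V - (d + 1).choose 2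

/-- `c(G,p)`: the number of congruence classes of complex realisations of `G`
equivalent to `p`. -/
def cNum {V : Type*} {d : ℕ} (G : SimpleGraph V) (p : V → Fin d → ℂ) : ℕ :=
  Nat.card (Quot fun q₁ q₂ : {q : V → Fin d → ℂ // Equivalent G p q} => Congruent q₁.1 q₂.1)

/-- `r(G,p)`: the number of congruence classes of real realisations of `G`
equivalent to `p`. -/
def rNum {V : Type*} {d : ℕ} (G : SimpleGraph V) (p : V → Fin d → ℝ) : ℕ :=
  Nat.card (Quot fun q₁ q₂ : {q : V → Fin d → ℝ // Equivalent G p q} => Congruent q₁.1 q₂.1)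

/-- The real `d`-realisation number `r_d(G)`: the supremum of `r(G,p)` over all
generic real realisations `p`. -/
def realNumber {V : Type*} (G : SimpleGraph V) (d : ℕ) : ℕ∞ :=
  ⨆ p : {p : V → Fin d → ℝ // IsGeneric ℝ p}, (rNum G p.1 : ℕ∞)

/-- A framework `(G,p)` is (continuously) rigid if every continuous flex is trivial. -/
def IsContRigid {V : Type*} {d : ℕ} (G : SimpleGraph V) (p : V → Fin d → ℂ) : Prop :=
  ∀ ε : ℝ, 0 < ε → ∀ ρ : ℝ → V → Fin d → ℂ,
    ContinuousOn ρ (Set.Ioo (-ε) ε) → ρ 0 = p →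
    (∀ t ∈ Set.Ioo (-ε) ε, Equivalent G p (ρ t)) →
    ∀ t ∈ Set.Ioo (-ε) ε, Congruent p (ρ t)

/-- `p ∈ X_{G,d}`: the `j`-th coordinate of `p(v_k)` vanishes for `k ≤ j`. -/
def Pinned {V : Type*} {d : ℕ} (v : Fin d → V) (p : V → Fin d → ℂ) : Prop :=
  ∀ j k : Fin d, k ≤ j → p (v k) j = 0

/-- `G'` is a `d`-dimensional 0-extension of `G`: a new vertex (the `Sum.inr`
vertex) is joined to the `d` distinct vertices `w 0, …, w (d-1)` of `G`. -/
def IsZeroExtension {V : Type*} (d : ℕ) (G : SimpleGraph V) (w : Fin d → V)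
    (G' : SimpleGraph (V ⊕ Unit)) : Prop :=
  Function.Injective w ∧
  (∀ u v : V, G'.Adj (Sum.inl u) (Sum.inl v) ↔ G.Adj u v) ∧
  (∀ u : V, G'.Adj (Sum.inl u) (Sum.inr ()) ↔ u ∈ Set.range w) ∧
  ∀ a b : Unit, ¬G'.Adj (Sum.inr a) (Sum.inr b)

/-- `G'` is obtained from `G` by a `d`-dimensional vertex split at `x`, where the
neighbourhood of `x` is partitioned into `N₁`, `N₂` and `{w 0, …, w (d-2)}`.
Here we identify the split vertex `x₁` with `x` (i.e. `Sum.inl x`) and take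
`x₂ = Sum.inr ()`; `x₁` keeps the edges to `N₁` and to the `wᵢ`, `x₂` is joined
to `N₂`, to the `wᵢ`, and to `x₁`. -/
def IsVertexSplit {V : Type*} (d : ℕ) (G : SimpleGraph V) (x : V) (N₁ N₂ : Set V)
    (w : Fin (d - 1) → V) (G' : SimpleGraph (V ⊕ Unit)) : Prop :=
  Function.Injective w ∧
  N₁ ∪ N₂ ∪ Set.range w = G.neighborSet x ∧
  Disjoint N₁ N₂ ∧ Disjoint N₁ (Set.range w) ∧ Disjoint N₂ (Set.range w) ∧
  (∀ u v : V, G'.Adj (Sum.inl u) (Sum.inl v) ↔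
    G.Adj u v ∧ ¬(u = x ∧ v ∈ N₂) ∧ ¬(v = x ∧ u ∈ N₂)) ∧
  (∀ u : V, G'.Adj (Sum.inl u) (Sum.inr ()) ↔ u ∈ N₂ ∨ u ∈ Set.range w ∨ u = x) ∧
  ∀ a b : Unit, ¬G'.Adj (Sum.inr a) (Sum.inr b)

/-- `G'` is obtained from `G` by a `d`-dimensional spider split at `x`, where the
neighbourhood of `x` is partitioned into `N₁`, `N₂` and `{w 0, …, w (d-1)}`.
Here we identify the split vertex `x₁` with `x` (i.e. `Sum.inl x`) and take
`x₂ = Sum.inr ()`; `x₁` keeps the edges to `N₁` and to the `wᵢ`, `x₂` is joined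
to `N₂` and to the `wᵢ` (and there is no edge `x₁x₂`). -/
def IsSpiderSplit {V : Type*} (d : ℕ) (G : SimpleGraph V) (x : V) (N₁ N₂ : Set V)
    (w : Fin d → V) (G' : SimpleGraph (V ⊕ Unit)) : Prop :=
  Function.Injective w ∧
  N₁ ∪ N₂ ∪ Set.range w = G.neighborSet x ∧
  Disjoint N₁ N₂ ∧ Disjoint N₁ (Set.range w) ∧ Disjoint N₂ (Set.range w) ∧
  (∀ u v : V, G'.Adj (Sum.inl u) (Sum.inl v) ↔
    G.Adj u v ∧ ¬(u = x ∧ v ∈ N₂) ∧ ¬(v = x ∧ u ∈ N₂)) ∧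
  (∀ u : V, G'.Adj (Sum.inl u) (Sum.inr ()) ↔ u ∈ N₂ ∨ u ∈ Set.range w) ∧
  ∀ a b : Unit, ¬G'.Adj (Sum.inr a) (Sum.inr b)

/-- The image in the ambient vertex type of a graph defined on (the coercion of)
a finite vertex set. -/
def amb {U : Type*} {s : Finset U} (G : SimpleGraph ↥s) : SimpleGraph U :=
  G.map (⟨Subtype.val, Subtype.val_injective⟩ : ↥s ↪ U)


open scoped RealInnerProductSpace

section Stmt4Aux

variable {d : ℕ}

abbrev toE (z : Fin d → ℝ) : EuclideanSpace ℝ (Fin d) := WithLp.toLp 2 z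

def phiMap (y : Fin d → EuclideanSpace ℝ (Fin d)) :
    (ℝ × EuclideanSpace ℝ (Fin d)) →ₗ[ℝ] EuclideanSpace ℝ (Fin d) where
  toFun sz := WithLp.toLp 2 (fun i => sz.1 - 2 * ⟪sz.2, y i⟫ : Fin d → ℝ)
  map_add' u v := by
    ext i
    show (u.1 + v.1) - 2 * ⟪u.2 + v.2, y i⟫ = (u.1 - 2*⟪u.2, y i⟫) + (v.1 - 2*⟪v.2, y i⟫)
    rw [inner_add_left]; ring
  map_smul' c u := by
    ext i
    show (c * u.1) - 2 * ⟪c • u.2, y i⟫ = c * (u.1 - 2*⟪u.2, y i⟫)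
    rw [real_inner_smul_left]; ring

lemma phiMap_apply (y : Fin d → EuclideanSpace ℝ (Fin d)) (u : ℝ × EuclideanSpace ℝ (Fin d))
    (i : Fin d) : phiMap y u i = u.1 - 2 * ⟪u.2, y i⟫ := rfl

lemma sqNorm_eq_inner (x : EuclideanSpace ℝ (Fin d)) : sqNorm (x : Fin d → ℝ) = ⟪x, x⟫ := by
  simp only [sqNorm, PiLp.inner_apply, RCLike.inner_apply, conj_trivial, sq]

lemma quad_factor {β X Y : ℝ} (hβ : 0 < β) (hD : 0 < X^2 - 4*β*Y) (t : ℝ) :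
    β*t^2 + X*t + Y =
      β * (t - (-X + Real.sqrt (X^2-4*β*Y))/(2*β)) * (t - (-X - Real.sqrt (X^2-4*β*Y))/(2*β)) := by
  have hs : Real.sqrt (X^2-4*β*Y) ^ 2 = X^2-4*β*Y := Real.sq_sqrt hD.le
  have hβ' : β ≠ 0 := hβ.ne'
  generalize Real.sqrt (X^2-4*β*Y) = s at hs ⊢
  field_simp
  linear_combination hs

lemma mem_orth_span_range_iff {ι : Type*} (g : ι → EuclideanSpace ℝ (Fin d))
    (z : EuclideanSpace ℝ (Fin d)) :
    z ∈ (Submodule.span ℝ (Set.range g))ᗮ ↔ ∀ i, ⟪g i, z⟫ = 0 := by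
  rw [Submodule.mem_orthogonal]
  constructor
  · intro h i
    exact h (g i) (Submodule.subset_span ⟨i, rfl⟩)
  · intro h u hu
    induction hu using Submodule.span_induction with
    | mem x hx => obtain ⟨i, rfl⟩ := hx; exact h i
    | zero => simp
    | add a b _ _ ha hb => rw [inner_add_left, ha, hb]; ring
    | smul c a _ ha => rw [real_inner_smul_left, ha]; ring

lemma phiMap_surj {y : Fin d → EuclideanSpace ℝ (Fin d)} (hy : AffineIndependent ℝ y) :
    LinearMap.range (phiMap y) = ⊤ := by
  rw [← Submodule.orthogonal_eq_bot_iff, Submodule.eq_bot_iff]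
  intro μ hμ
  rw [Submodule.mem_orthogonal] at hμ
  have h1 : ∑ i, μ i = 0 := by
    have h := hμ (phiMap y (1, 0)) (LinearMap.mem_range_self _ _)
    simpa [PiLp.inner_apply, phiMap_apply] using h
  have h2 : ∑ i, μ i • y i = 0 := by
    have key : ∀ z : EuclideanSpace ℝ (Fin d), ⟪z, ∑ i, μ i • y i⟫ = 0 := by
      intro z
      have h := hμ (phiMap y (0, z)) (LinearMap.mem_range_self _ _)
      rw [PiLp.inner_apply] at h
      simp only [phiMap_apply, RCLike.inner_apply, conj_trivial] at h
      calc ⟪z, ∑ i, μ i • y i⟫ = ∑ i, μ i * ⟪z, y i⟫ := by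
            rw [inner_sum]; exact Finset.sum_congr rfl fun i _ => real_inner_smul_right z (y i) (μ i)
        _ = (-(1:ℝ)/2) * ∑ i, (0 - 2*⟪z, y i⟫) * μ i := by
            rw [Finset.mul_sum]; exact Finset.sum_congr rfl fun i _ => by ring
        _ = 0 := by rw [show ∑ i, (0 - 2*⟪z, y i⟫) * μ i = ∑ i, μ i * (0 - 2*⟪z, y i⟫) from Finset.sum_congr rfl fun i _ => mul_comm _ _, h]; ring
    exact inner_self_eq_zero.mp (key _)
  have := affineIndependent_iff.mp hy Finset.univ μ (by simpa using h1) (by simpa using h2)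
  ext i; exact this i (Finset.mem_univ i)

end Stmt4Aux

set_option maxHeartbeats 2000000 in
/-- For affinely independent points `y 0, …, y (d-1)` in `ℝ^d` and
`f(z) = (‖z - y i‖²)_i`, there is a non-empty open `U` inside the image of `f` such
that every `λ ∈ U` has exactly two preimages, and `U` contains a ray
`{(r,…,r) : r > R}`. -/
theorem stmt_4 {d : ℕ} (hd : 1 ≤ d) (y : Fin d → Fin d → ℝ)
    (hy : AffineIndependent ℝ y) :
    ∃ U : Set (Fin d → ℝ), U.Nonempty ∧ IsOpen U ∧
      U ⊆ Set.range (fun z : Fin d → ℝ => fun i => sqNorm (z - y i)) ∧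
      (∀ lam ∈ U, ∃ z₁ z₂ : Fin d → ℝ, z₁ ≠ z₂ ∧
        {z : Fin d → ℝ | (fun i => sqNorm (z - y i)) = lam} = {z₁, z₂}) ∧
      ∃ R : ℝ, 0 < R ∧ ∀ r : ℝ, R < r → (fun _ => r) ∈ U := by
  classical
  let Y : Fin d → EuclideanSpace ℝ (Fin d) := fun i => WithLp.toLp 2 (y i)
  have hY : AffineIndependent ℝ Y := hy.map' (WithLp.linearEquiv 2 ℝ (Fin d → ℝ)).symm.toLinearMap.toAffineMap (WithLp.linearEquiv 2 ℝ (Fin d → ℝ)).symm.injective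
  set Φ := phiMap Y with hΦdef
  obtain ⟨Q, hQ⟩ := Φ.exists_rightInverse_of_surjective (phiMap_surj hY)
  have hQapp : ∀ μ, Φ (Q μ) = μ := fun μ => by
    have := LinearMap.ext_iff.mp hQ μ; simpa using this
  have hd0 : 0 < d := hd
  let i0 : Fin d := ⟨0, hd0⟩
  set T := Submodule.span ℝ (Set.range (fun i : Fin d => Y i - Y i0)) with hTdef
  -- finrank T = d - 1
  have hTfin : Module.finrank ℝ T = d - 1 := by
    have hli : LinearIndependent ℝ (fun i : {i : Fin d // i ≠ i0} => Y i - Y i0) :=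
      (affineIndependent_iff_linearIndependent_vsub ℝ Y i0).mp hY
    have hspan : T = Submodule.span ℝ
        (Set.range (fun i : {i : Fin d // i ≠ i0} => Y i - Y i0)) := by
      apply le_antisymm
      · rw [hTdef, Submodule.span_le]
        rintro _ ⟨i, rfl⟩
        by_cases hi : i = i0
        · subst hi
          simp only [sub_self]
          exact Submodule.zero_mem _
        · exact Submodule.subset_span ⟨⟨i, hi⟩, rfl⟩
      · rw [hTdef, Submodule.span_le]
        rintro _ ⟨i, rfl⟩
        exact Submodule.subset_span ⟨i.1, rfl⟩
    rw [hspan, finrank_span_eq_card hli]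
    simp [Fintype.card_subtype_compl]
  have hSfin : Module.finrank ℝ (↥Tᗮ) = 1 := by
    have h := Submodule.finrank_add_finrank_orthogonal T
    rw [hTfin, finrank_euclideanSpace_fin] at h
    omega
  obtain ⟨v, hv0, hvspan⟩ := finrank_eq_one_iff'.mp hSfin
  set b₀ : EuclideanSpace ℝ (Fin d) := (v : EuclideanSpace ℝ (Fin d)) with hb₀def
  have hb₀ne : b₀ ≠ 0 := fun h => hv0 (Subtype.ext h)
  have hb₀orth : ∀ i, ⟪Y i - Y i0, b₀⟫ = 0 :=
    (mem_orth_span_range_iff (fun i : Fin d => Y i - Y i0) b₀).mp v.2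
  have hb₀S : ∀ i, ⟪b₀, Y i⟫ = ⟪b₀, Y i0⟫ := by
    intro i
    have h := hb₀orth i
    rw [inner_sub_left] at h
    have c1 := real_inner_comm (Y i) b₀
    have c2 := real_inner_comm (Y i0) b₀
    linarith
  set a₀ : ℝ := 2 * ⟪b₀, Y i0⟫ with ha₀def
  set k₀ : ℝ × EuclideanSpace ℝ (Fin d) := (a₀, b₀) with hk₀def
  have hmemS : ∀ z : EuclideanSpace ℝ (Fin d),
      (∀ i, ⟪z, Y i⟫ = ⟪z, Y i0⟫) → ∃ t : ℝ, z = t • b₀ := by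
    intro z hz
    have hzmem : z ∈ Tᗮ := by
      rw [hTdef]
      refine (mem_orth_span_range_iff (fun i : Fin d => Y i - Y i0) z).mpr fun i => ?_
      rw [inner_sub_left]
      have c1 := real_inner_comm (Y i) z
      have c2 := real_inner_comm (Y i0) z
      have := hz i
      linarith
    obtain ⟨t, ht⟩ := hvspan ⟨z, hzmem⟩
    have := congrArg Subtype.val ht
    exact ⟨t, this.symm⟩
  -- kernel characterisation
  have hker : ∀ u : ℝ × EuclideanSpace ℝ (Fin d), Φ u = 0 ↔ ∃ t : ℝ, u = t • k₀ := by
    intro u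
    constructor
    · intro h
      have hcomp : ∀ i, u.1 - 2*⟪u.2, Y i⟫ = 0 := fun i => congrArg (fun w : EuclideanSpace ℝ (Fin d) => w i) h
      have hconst : ∀ i, ⟪u.2, Y i⟫ = ⟪u.2, Y i0⟫ := fun i => by
        have h1 := hcomp i; have h2 := hcomp i0; linarith
      obtain ⟨t, ht⟩ := hmemS u.2 hconst
      refine ⟨t, Prod.ext ?_ ?_⟩
      · show u.1 = t * a₀
        have h2 := hcomp i0
        rw [ht, real_inner_smul_left] at h2
        rw [ha₀def]; linarith
      · exact ht
    · rintro ⟨t, rfl⟩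
      rw [map_smul]
      have hk0 : Φ k₀ = 0 := by
        ext i
        show a₀ - 2*⟪b₀, Y i⟫ = 0
        rw [hb₀S i, ha₀def]; ring
      rw [hk0, smul_zero]
  -- the data
  set cY : EuclideanSpace ℝ (Fin d) := WithLp.toLp 2 (fun i => ⟪Y i, Y i⟫ : Fin d → ℝ) with hcYdef
  set σ : EuclideanSpace ℝ (Fin d) → ℝ × EuclideanSpace ℝ (Fin d) :=
    fun lam => Q (lam - cY) with hσdef
  set z1 : EuclideanSpace ℝ (Fin d) → EuclideanSpace ℝ (Fin d) := fun lam => (σ lam).2 with hz1def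
  set s1 : EuclideanSpace ℝ (Fin d) → ℝ := fun lam => (σ lam).1 with hs1def
  set β : ℝ := ⟪b₀, b₀⟫ with hβdef
  have hβ : 0 < β :=
    lt_of_le_of_ne real_inner_self_nonneg (fun h => hb₀ne (inner_self_eq_zero.mp h.symm))
  set Xf : EuclideanSpace ℝ (Fin d) → ℝ := fun lam => 2 * ⟪z1 lam, b₀⟫ - a₀ with hXfdef
  set Yf : EuclideanSpace ℝ (Fin d) → ℝ := fun lam => ⟪z1 lam, z1 lam⟫ - s1 lam with hYfdef
  set Df : EuclideanSpace ℝ (Fin d) → ℝ := fun lam => Xf lam ^ 2 - 4 * β * Yf lam with hDfdef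
  -- solution characterisation
  have hsol : ∀ lam z : Fin d → ℝ, ((fun i => sqNorm (z - y i)) = lam) ↔
      ∃ t : ℝ, toE z = z1 (toE lam) + t • b₀ ∧
        β * t^2 + Xf (toE lam) * t + Yf (toE lam) = 0 := by
    intro lam z
    have hstep1 : ((fun i => sqNorm (z - y i)) = lam) ↔
        Φ (⟪toE z, toE z⟫, toE z) = toE lam - cY := by
      have h1 : ∀ i, sqNorm (z - y i)
          = ⟪toE z, toE z⟫ - 2*⟪toE z, Y i⟫ + ⟪Y i, Y i⟫ := by
        intro i
        have h0 : sqNorm (z - y i) = ⟪toE z - Y i, toE z - Y i⟫ :=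
          sqNorm_eq_inner (toE z - Y i)
        rw [h0, inner_sub_left, inner_sub_right, inner_sub_right,
          real_inner_comm (Y i) (toE z)]
        ring
      constructor
      · intro h
        ext i
        have hc : sqNorm (z - y i) = lam i := congrFun h i
        show ⟪toE z, toE z⟫ - 2*⟪toE z, Y i⟫ = lam i - ⟪Y i, Y i⟫
        have := h1 i
        linarith
      · intro h
        funext i
        have hc : ⟪toE z, toE z⟫ - 2*⟪toE z, Y i⟫ = lam i - ⟪Y i, Y i⟫ := congrArg (fun w : EuclideanSpace ℝ (Fin d) => w i) h
        show sqNorm (z - y i) = lam i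
        have := h1 i
        linarith
    rw [hstep1]
    have hσv : Φ (σ (toE lam)) = toE lam - cY := hQapp _
    have hstep2 : (Φ (⟪toE z, toE z⟫, toE z) = toE lam - cY) ↔
        Φ ((⟪toE z, toE z⟫, toE z) - σ (toE lam)) = 0 := by
      rw [map_sub, hσv, sub_eq_zero]
    rw [hstep2, hker]
    refine exists_congr fun t => ?_
    rw [Prod.ext_iff]
    have hfst : ((⟪toE z, toE z⟫, toE z) - σ (toE lam)).1 = ⟪toE z, toE z⟫ - s1 (toE lam) := rfl
    have hsnd : ((⟪toE z, toE z⟫, toE z) - σ (toE lam)).2 = toE z - z1 (toE lam) := rfl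
    have hk1 : (t • k₀).1 = t * a₀ := rfl
    have hk2 : (t • k₀).2 = t • b₀ := rfl
    rw [hfst, hsnd, hk1, hk2]
    have hXv : Xf (toE lam) = 2*⟪z1 (toE lam), b₀⟫ - a₀ := rfl
    have hYv : Yf (toE lam) = ⟪z1 (toE lam), z1 (toE lam)⟫ - s1 (toE lam) := rfl
    have hexp : ∀ (w : EuclideanSpace ℝ (Fin d)) (t : ℝ),
        ⟪w + t • b₀, w + t • b₀⟫ = ⟪w, w⟫ + 2*t*⟪w, b₀⟫ + t^2*β := by
      intro w t
      have hcomm := real_inner_comm w b₀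
      rw [inner_add_left, inner_add_right, inner_add_right, real_inner_smul_left,
        real_inner_smul_right, real_inner_smul_left, real_inner_smul_right, hβdef]
      linear_combination t * hcomm
    constructor
    · rintro ⟨h1, h2⟩
      have hz : toE z = z1 (toE lam) + t • b₀ := by
        have := sub_eq_iff_eq_add.mp h2
        rw [this, add_comm]
      refine ⟨hz, ?_⟩
      have hip : ⟪toE z, toE z⟫
          = ⟪z1 (toE lam), z1 (toE lam)⟫ + 2*t*⟪z1 (toE lam), b₀⟫ + t^2*β := by
        rw [hz]; exact hexp _ t
      rw [hXv, hYv]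
      linear_combination h1 - hip
    · rintro ⟨hz, hquad⟩
      have h2 : toE z - z1 (toE lam) = t • b₀ := by
        rw [hz, add_sub_cancel_left]
      refine ⟨?_, h2⟩
      have hip : ⟪toE z, toE z⟫
          = ⟪z1 (toE lam), z1 (toE lam)⟫ + 2*t*⟪z1 (toE lam), b₀⟫ + t^2*β := by
        rw [hz]; exact hexp _ t
      rw [hXv, hYv] at hquad
      linear_combination hip + hquad
  -- continuity and openness
  have hQcont : Continuous Q := Q.continuous_of_finiteDimensional
  have hz1cont : Continuous z1 := by
    rw [hz1def]
    exact continuous_snd.comp (hQcont.comp (continuous_id.sub continuous_const))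
  have hs1cont : Continuous s1 := by
    rw [hs1def]
    exact continuous_fst.comp (hQcont.comp (continuous_id.sub continuous_const))
  have hDfcont : Continuous Df := by
    rw [hDfdef, hXfdef, hYfdef]
    have hX : Continuous fun lam => 2 * ⟪z1 lam, b₀⟫ - a₀ :=
      (continuous_const.mul (hz1cont.inner continuous_const)).sub continuous_const
    have hY : Continuous fun lam => ⟪z1 lam, z1 lam⟫ - s1 lam :=
      (hz1cont.inner hz1cont).sub hs1cont
    exact (hX.pow 2).sub (continuous_const.mul hY)
  -- ray computation
  set one : EuclideanSpace ℝ (Fin d) := WithLp.toLp 2 ((fun _ => (1:ℝ)) : Fin d → ℝ) with honedef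
  have hQone : ∀ i, (Q one).1 - 2*⟪(Q one).2, Y i⟫ = 1 := fun i => congrArg (fun w : EuclideanSpace ℝ (Fin d) => w i) (hQapp one)
  obtain ⟨μ, hw⟩ : ∃ μ : ℝ, (Q one).2 = μ • b₀ := by
    apply hmemS
    intro i
    have h1 := hQone i
    have h2 := hQone i0
    linarith
  have hα : (Q one).1 = μ * a₀ + 1 := by
    have h := hQone i0
    rw [hw, real_inner_smul_left] at h
    rw [ha₀def]
    linarith
  set zc : EuclideanSpace ℝ (Fin d) := (Q cY).2 with hzcdef
  set sc : ℝ := (Q cY).1 with hscdef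
  have honesmul : ∀ r : ℝ, toE (fun _ => r) = r • one := by
    intro r
    ext i
    show r = r * 1
    rw [mul_one]
  have hz1r : ∀ r : ℝ, z1 (toE fun _ => r) = (r*μ) • b₀ - zc := by
    intro r
    show (Q (toE (fun _ => r) - cY)).2 = _
    rw [honesmul r, map_sub, map_smul]
    show r • (Q one).2 - (Q cY).2 = _
    rw [hw, smul_smul, hzcdef]
  have hs1r : ∀ r : ℝ, s1 (toE fun _ => r) = r * (μ * a₀ + 1) - sc := by
    intro r
    show (Q (toE (fun _ => r) - cY)).1 = _
    rw [honesmul r, map_sub, map_smul]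
    show r * (Q one).1 - (Q cY).1 = _
    rw [hα, hscdef]
  set C : ℝ := (2*⟪zc, b₀⟫ + a₀)^2 - 4*β*(⟪zc, zc⟫ + sc) with hCdef
  have hray : ∀ r : ℝ, Df (toE fun _ => r) = 4*β*r + C := by
    intro r
    have e1 : ⟪((r*μ) • b₀ - zc : EuclideanSpace ℝ (Fin d)), b₀⟫ = (r*μ)*β - ⟪zc, b₀⟫ := by
      rw [inner_sub_left, real_inner_smul_left, hβdef]
    have e2 : ⟪((r*μ) • b₀ - zc : EuclideanSpace ℝ (Fin d)), ((r*μ) • b₀ - zc : EuclideanSpace ℝ (Fin d))⟫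
        = (r*μ)^2*β - 2*(r*μ)*⟪zc, b₀⟫ + ⟪zc, zc⟫ := by
      have hcomm := real_inner_comm zc b₀
      rw [inner_sub_left, inner_sub_right, inner_sub_right, real_inner_smul_left,
        real_inner_smul_left, real_inner_smul_right, real_inner_smul_right, hβdef]
      linear_combination (-(r*μ)) * hcomm
    have hXv : Xf (toE fun _ => r) = 2*((r*μ)*β - ⟪zc, b₀⟫) - a₀ := by
      show 2*⟪z1 (toE fun _ => r), b₀⟫ - a₀ = _
      rw [hz1r r, e1]
    have hYv : Yf (toE fun _ => r)
        = ((r*μ)^2*β - 2*(r*μ)*⟪zc, b₀⟫ + ⟪zc, zc⟫) - (r*(μ*a₀+1) - sc) := by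
      show ⟪z1 (toE fun _ => r), z1 (toE fun _ => r)⟫ - s1 (toE fun _ => r) = _
      rw [hz1r r, hs1r r, e2]
    show Xf (toE fun _ => r) ^ 2 - 4*β*Yf (toE fun _ => r) = _
    rw [hXv, hYv, hCdef]
    ring
  set R : ℝ := (|C|+1)/(4*β) with hRdef
  have hRpos : 0 < R := by rw [hRdef]; positivity
  have hrayU : ∀ r : ℝ, R < r → 0 < Df (toE fun _ => r) := by
    intro r hr
    rw [hray r]
    rw [hRdef, div_lt_iff₀ (by positivity : (0:ℝ) < 4*β)] at hr
    have h2 := neg_abs_le C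
    nlinarith
  refine ⟨{lam : Fin d → ℝ | 0 < Df (toE lam)}, ?_, ?_, ?_, ?_, ?_⟩
  · exact ⟨(fun _ => R + 1), hrayU (R+1) (by linarith)⟩
  · exact isOpen_lt continuous_const (hDfcont.comp (PiLp.continuous_toLp 2 _))
  · intro lam hlam
    have hD' : 0 < Xf (toE lam)^2 - 4*β*Yf (toE lam) := hlam
    refine ⟨WithLp.ofLp (z1 (toE lam) + ((-Xf (toE lam) + Real.sqrt (Xf (toE lam)^2 - 4*β*Yf (toE lam)))/(2*β)) • b₀), ?_⟩
    refine (hsol lam _).mpr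
      ⟨(-Xf (toE lam) + Real.sqrt (Xf (toE lam)^2 - 4*β*Yf (toE lam)))/(2*β), rfl, ?_⟩
    rw [quad_factor hβ hD', sub_self, mul_zero, zero_mul]
  · intro lam hlam
    have hD' : 0 < Xf (toE lam)^2 - 4*β*Yf (toE lam) := hlam
    have hspos : 0 < Real.sqrt (Xf (toE lam)^2 - 4*β*Yf (toE lam)) := Real.sqrt_pos.mpr hD'
    set s := Real.sqrt (Xf (toE lam)^2 - 4*β*Yf (toE lam)) with hsdef
    set tp := (-Xf (toE lam) + s)/(2*β) with htpdef
    set tm := (-Xf (toE lam) - s)/(2*β) with htmdef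
    have hfac : ∀ t : ℝ, β*t^2 + Xf (toE lam)*t + Yf (toE lam) = β*(t - tp)*(t - tm) := by
      intro t
      rw [htpdef, htmdef, hsdef]
      exact quad_factor hβ hD' t
    have htne : tp ≠ tm := by
      rw [htpdef, htmdef]
      intro h
      rw [div_eq_div_iff (by positivity) (by positivity)] at h
      nlinarith
    refine ⟨WithLp.ofLp (z1 (toE lam) + tp • b₀), WithLp.ofLp (z1 (toE lam) + tm • b₀), ?_, ?_⟩
    · intro h0
      have h : z1 (toE lam) + tp • b₀ = z1 (toE lam) + tm • b₀ := congrArg (WithLp.toLp 2) h0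
      have h' : tp • b₀ = tm • b₀ := by
        have h2 := congrArg (fun w : EuclideanSpace ℝ (Fin d) => w - z1 (toE lam)) h
        simpa [add_sub_cancel_left] using h2
      have h'' : (tp - tm) • b₀ = (0 : EuclideanSpace ℝ (Fin d)) := by
        rw [sub_smul, h', sub_self]
      rcases smul_eq_zero.mp h'' with h3 | h3
      · exact htne (by linarith [sub_eq_zero.mp h3])
      · exact hb₀ne h3
    · ext zz
      simp only [Set.mem_setOf_eq, Set.mem_insert_iff, Set.mem_singleton_iff]
      rw [hsol lam zz]
      constructor
      · rintro ⟨t, hzt, hqt⟩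
        rw [hfac t] at hqt
        rcases mul_eq_zero.mp hqt with h | h
        · rcases mul_eq_zero.mp h with h | h
          · exact absurd h hβ.ne'
          · left
            rw [sub_eq_zero.mp h] at hzt
            exact congrArg WithLp.ofLp hzt
        · right
          rw [sub_eq_zero.mp h] at hzt
          exact congrArg WithLp.ofLp hzt
      · rintro (rfl | rfl)
        · exact ⟨tp, rfl, by rw [hfac tp]; simp⟩
        · exact ⟨tm, rfl, by rw [hfac tm]; simp⟩
  · exact ⟨R, hRpos, fun r hr => hrayU r hr⟩


end RigidityPaper
end
end

section
/- Let d ≥ 1, let G = (V,E) be a graph with |V| ≥ d+1, fix an ordered d-tuple of vertices v_1,…,v_d, and let p ∈ X_{G,d} be a realisation such that the points p(v_1), …, p(v_d) are affinely independent. Let M be the matrix obtained from the rigidity matrix R(G,p) by deleting the binom(d+1,2) columns indexed by the pairs (j, v_k) with 1 ≤ k ≤ j ≤ d. Then rank M = d|V| − binom(d+1,2) if and only if (G,p) is infinitesimally rigid. -/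
open scoped BigOperators

noncomputable section

namespace RigidityPaper

section Aux18



/-- Extension by zero from the first `m` coordinates. -/
def extCoord (m d : ℕ) : (Fin m → ℂ) →ₗ[ℂ] (Fin d → ℂ) where
  toFun x := fun j => if h : (j : ℕ) < m then x ⟨j, h⟩ else 0
  map_add' x y := by funext j; by_cases h : (j : ℕ) < m <;> simp [h]
  map_smul' c x := by funext j; by_cases h : (j : ℕ) < m <;> simp [h]

lemma nondegen {V : Type*} {d : ℕ} (v : Fin d → V) (p : V → Fin d → ℂ)
    (hp : Pinned v p)
    (haff : AffineIndependent ℂ (fun i => p (v i))) (m : ℕ) (hm : m + 1 < d) :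
    p (v ⟨m + 1, hm⟩) ⟨m, by omega⟩ ≠ 0 := by
  intro h0
  haveI : NeZero d := ⟨by omega⟩
  have hv0 : ∀ j, p (v 0) j = 0 := fun j => hp j 0 (by simp [Fin.le_def])
  have hli := (affineIndependent_iff_linearIndependent_vsub ℂ (fun i => p (v i)) 0).mp haff
  have hfun : (fun i : {x : Fin d // x ≠ 0} => p (v i) -ᵥ p (v (0 : Fin d))) =
      fun i : {x : Fin d // x ≠ 0} => p (v i) := by
    funext i; funext j; simp [vsub_eq_sub, hv0]
  rw [hfun] at hli
  set g : Fin (m + 1) → {x : Fin d // x ≠ 0} :=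
    fun r => ⟨⟨(r : ℕ) + 1, by omega⟩, by intro h; have := congrArg Fin.val h; simp at this⟩ with hg
  have hginj : Function.Injective g := by
    intro a b hab
    have h2 : ((g a : Fin d) : ℕ) = ((g b : Fin d) : ℕ) := by rw [hab]
    simp [hg] at h2
    exact Fin.ext h2
  have hli2 : LinearIndependent ℂ (fun r : Fin (m + 1) => p (v (g r))) := hli.comp g hginj
  have hmem : ∀ r : Fin (m + 1), p (v (g r)) ∈ LinearMap.range (extCoord m d) := by
    intro r
    refine ⟨fun i => p (v (g r)) ⟨(i : ℕ), by omega⟩, ?_⟩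
    funext j
    simp only [extCoord, LinearMap.coe_mk, AddHom.coe_mk]
    by_cases h : (j : ℕ) < m
    · rw [dif_pos h]
    · rw [dif_neg h]
      push_neg at h
      symm
      by_cases h2 : (r : ℕ) + 1 ≤ (j : ℕ)
      · exact hp j ⟨(r : ℕ) + 1, by omega⟩ (by simp [Fin.le_def]; omega)
      · have hr : (r : ℕ) = m := by omega
        have hj : (j : ℕ) = m := by omega
        have e1 : (⟨(r : ℕ) + 1, by omega⟩ : Fin d) = ⟨m + 1, hm⟩ := by
          simp [Fin.ext_iff, hr]
        have e2 : j = (⟨m, by omega⟩ : Fin d) := Fin.ext hj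
        rw [e2]
        show p (v ⟨(r : ℕ) + 1, by omega⟩) ⟨m, by omega⟩ = 0
        rw [e1]
        exact h0
  have hspan : Submodule.span ℂ (Set.range fun r : Fin (m + 1) => p (v (g r))) ≤
      LinearMap.range (extCoord m d) := by
    rw [Submodule.span_le]
    rintro _ ⟨r, rfl⟩
    exact hmem r
  have h1 : Module.finrank ℂ (Submodule.span ℂ
      (Set.range fun r : Fin (m + 1) => p (v (g r)))) = m + 1 := by
    rw [finrank_span_eq_card hli2, Fintype.card_fin]
  have h2 : Module.finrank ℂ (LinearMap.range (extCoord m d)) ≤ m := by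
    have := LinearMap.finrank_range_le (extCoord m d)
    rwa [Module.finrank_fin_fun] at this
  have := Submodule.finrank_mono hspan
  omega





/-- The trivial flex associated to a pair `(i,j)`: a translation when `i = j`,
an infinitesimal rotation when `i ≠ j`. -/
def trivFlex {V : Type*} {d : ℕ} (p : V → Fin d → ℂ) (q : Fin d × Fin d) :
    (V × Fin d) → ℂ :=
  fun xm =>
    if q.1 = q.2 then (if xm.2 = q.1 then 1 else 0)
    else (if xm.2 = q.1 then p xm.1 q.2 else 0) - (if xm.2 = q.2 then p xm.1 q.1 else 0)

def flexMap {V : Type*} [Fintype V] {d : ℕ} (p : V → Fin d → ℂ) :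
    ({q : Fin d × Fin d // q.1 ≤ q.2} → ℂ) →ₗ[ℂ] ((V × Fin d) → ℂ) where
  toFun c := ∑ q : {q : Fin d × Fin d // q.1 ≤ q.2}, c q • trivFlex p q.1
  map_add' c₁ c₂ := by simp [add_smul, Finset.sum_add_distrib]
  map_smul' t c := by simp [smul_smul, Finset.smul_sum]

/-- Extension by zero of a vector indexed by the non-pinned coordinates. -/
def extCols {V : Type*} [DecidableEq V] {d : ℕ} (v : Fin d → V) :
    ({vi : V × Fin d // ¬∃ k : Fin d, vi.1 = v k ∧ k ≤ vi.2} → ℂ) →ₗ[ℂ]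
      ((V × Fin d) → ℂ) where
  toFun x := fun vi => if h : ∃ k : Fin d, vi.1 = v k ∧ k ≤ vi.2 then 0 else x ⟨vi, h⟩
  map_add' x y := by
    funext vi; by_cases h : ∃ k : Fin d, vi.1 = v k ∧ k ≤ vi.2 <;> simp [h]
  map_smul' c x := by
    funext vi; by_cases h : ∃ k : Fin d, vi.1 = v k ∧ k ≤ vi.2 <;> simp [h]

lemma rigidity_mulVec {V : Type*} [Fintype V] [DecidableEq V] {d : ℕ}
    (G : SimpleGraph V) (p : V → Fin d → ℂ)
    (e : {e : V × V // G.Adj e.1 e.2}) (x : (V × Fin d) → ℂ) :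
    (rigidityMatrix G p).mulVec x e =
      ∑ m, (p e.1.1 m - p e.1.2 m) * (x (e.1.1, m) - x (e.1.2, m)) := by
  obtain ⟨⟨a, b⟩, he⟩ := e
  have hne : a ≠ b := he.ne
  simp only [Matrix.mulVec, dotProduct]
  rw [Fintype.sum_prod_type]
  have hterm : ∀ y : V,
      (∑ m, rigidityMatrix G p ⟨(a, b), he⟩ (y, m) * x (y, m)) =
        (if y = a then ∑ m, (p a m - p b m) * x (a, m) else 0) +
        (if y = b then ∑ m, (p b m - p a m) * x (b, m) else 0) := by
    intro y
    by_cases h1 : y = a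
    · subst h1
      simp [rigidityMatrix, hne]
    · by_cases h2 : y = b <;> simp [rigidityMatrix, h1, h2, Ne.symm hne]
  rw [Finset.sum_congr rfl fun y _ => hterm y, Finset.sum_add_distrib,
    Finset.sum_ite_eq' Finset.univ a, Finset.sum_ite_eq' Finset.univ b]
  simp only [Finset.mem_univ, if_pos]
  rw [← Finset.sum_add_distrib]
  exact Finset.sum_congr rfl fun m _ => by ring

lemma flex_ker {V : Type*} [Fintype V] [DecidableEq V] {d : ℕ}
    (G : SimpleGraph V) (p : V → Fin d → ℂ) (q : Fin d × Fin d) :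
    (rigidityMatrix G p).mulVec (trivFlex p q) = 0 := by
  funext e
  rw [rigidity_mulVec]
  obtain ⟨i, j⟩ := q
  by_cases hij : i = j
  · simp [trivFlex, hij]
  · simp only [trivFlex, if_neg hij]
    have : ∀ m : Fin d,
        (p e.1.1 m - p e.1.2 m) *
          (((if m = i then p e.1.1 j else 0) - (if m = j then p e.1.1 i else 0)) -
            ((if m = i then p e.1.2 j else 0) - (if m = j then p e.1.2 i else 0))) =
        (if m = i then (p e.1.1 m - p e.1.2 m) * (p e.1.1 j - p e.1.2 j) else 0) -
        (if m = j then (p e.1.1 m - p e.1.2 m) * (p e.1.1 i - p e.1.2 i) else 0) := by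
      intro m
      by_cases h1 : m = i <;> by_cases h2 : m = j <;> simp [h1, h2, hij, Ne.symm hij] <;> ring
    rw [Finset.sum_congr rfl fun m _ => this m, Finset.sum_sub_distrib,
      Finset.sum_ite_eq' Finset.univ i, Finset.sum_ite_eq' Finset.univ j]
    simp only [Finset.mem_univ, if_pos, Pi.zero_apply]
    ring


lemma flex_inj {V : Type*} [Fintype V] [DecidableEq V] {d : ℕ} (hd : 1 ≤ d)
    (v : Fin d → V) (p : V → Fin d → ℂ) (hp : Pinned v p)
    (haff : AffineIndependent ℂ (fun i => p (v i)))
    (c : {q : Fin d × Fin d // q.1 ≤ q.2} → ℂ)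
    (hc : ∀ k j : Fin d, k ≤ j → flexMap p c (v k, j) = 0) : c = 0 := by
  haveI : NeZero d := ⟨by omega⟩
  have hv0 : ∀ j, p (v 0) j = 0 := fun j => hp j 0 (by simp [Fin.le_def])
  have happ : ∀ xm : V × Fin d, flexMap p c xm =
      ∑ q : {q : Fin d × Fin d // q.1 ≤ q.2}, c q * trivFlex p q.1 xm := by
    intro xm
    simp [flexMap, Finset.sum_apply]
  have htrans : ∀ j : Fin d, c ⟨(j, j), le_refl j⟩ = 0 := by
    intro j
    have h := hc 0 j (by simp [Fin.le_def])
    rw [happ] at h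
    have key : ∀ q : {q : Fin d × Fin d // q.1 ≤ q.2},
        c q * trivFlex p q.1 (v 0, j) = if q = ⟨(j, j), le_refl j⟩ then c q else 0 := by
      rintro ⟨⟨i, i'⟩, hq⟩
      by_cases h1 : i = i'
      · subst h1
        by_cases h2 : j = i
        · subst h2; simp [trivFlex]
        · simp [trivFlex, h2, Subtype.ext_iff, Prod.ext_iff, Ne.symm h2]
      · have hne : (⟨(i, i'), hq⟩ : {q : Fin d × Fin d // q.1 ≤ q.2}) ≠
            ⟨(j, j), le_refl j⟩ := by
          simp only [ne_eq, Subtype.mk.injEq, Prod.mk.injEq, not_and]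
          intro hij hi'j; exact h1 (hij.trans hi'j.symm)
        rw [if_neg hne]
        simp [trivFlex, h1, hv0]
    rw [Finset.sum_congr rfl fun q _ => key q, Finset.sum_ite_eq' Finset.univ] at h
    simpa using h
  have hrot : ∀ (j : Fin d) (m : ℕ) (hm : m < (j : ℕ)),
      c ⟨(⟨m, hm.trans j.isLt⟩, j), by rw [Fin.le_def]; exact hm.le⟩ = 0 := by
    intro j m
    induction m using Nat.strong_induction_on with
    | _ m IH =>
      intro hm
      have hk : m + 1 < d := by have := j.isLt; omega
      set k : Fin d := ⟨m + 1, hk⟩ with hkdef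
      have hpin : ∀ l : Fin d, m + 1 ≤ (l : ℕ) → p (v k) l = 0 := by
        intro l hl
        exact hp l k (by rw [Fin.le_def]; exact hl)
      have hckj := hc k j (by rw [Fin.le_def]; exact hm)
      rw [happ] at hckj
      set q0 : {q : Fin d × Fin d // q.1 ≤ q.2} :=
        ⟨(⟨m, hm.trans j.isLt⟩, j), by rw [Fin.le_def]; exact hm.le⟩ with hq0
      have key : ∀ q : {q : Fin d × Fin d // q.1 ≤ q.2},
          c q * trivFlex p q.1 (v k, j) =
            if q = q0 then -(c q * p (v k) ⟨m, hm.trans j.isLt⟩) else 0 := by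
        rintro ⟨⟨i, i'⟩, hq⟩
        by_cases h1 : i = i'
        · subst h1
          have hne : (⟨(i, i), hq⟩ : {q : Fin d × Fin d // q.1 ≤ q.2}) ≠ q0 := by
            simp only [hq0, ne_eq, Subtype.mk.injEq, Prod.mk.injEq, not_and]
            intro hi hij
            rw [hij] at hi
            have := congrArg Fin.val hi
            simp at this
            omega
          rw [if_neg hne]
          by_cases h2 : j = i
          · subst h2
            have : c ⟨(j, j), hq⟩ = 0 := htrans j
            simp [trivFlex, this]
          · simp [trivFlex, h2]
        · have hlt : (i : ℕ) < (i' : ℕ) := Fin.lt_def.mp (lt_of_le_of_ne hq fun h => h1 h)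
          by_cases h2 : j = i
          · have hi' : m + 1 ≤ (i' : ℕ) := by
              have : (j : ℕ) < (i' : ℕ) := by rw [h2]; exact hlt
              omega
            have hne : (⟨(i, i'), hq⟩ : {q : Fin d × Fin d // q.1 ≤ q.2}) ≠ q0 := by
              simp only [hq0, ne_eq, Subtype.mk.injEq, Prod.mk.injEq, not_and]
              intro hi hij
              have := congrArg Fin.val hi
              simp at this
              omega
            rw [if_neg hne]
            have hij' : j ≠ i' := by
              intro h
              rw [← h, h2] at hlt
              exact lt_irrefl _ hlt
            simp [trivFlex, h1, h2, hij', hpin i' hi']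
          · by_cases h3 : j = i'
            · subst h3
              by_cases h4 : (i : ℕ) < m
              · have hcq : c ⟨(i, j), hq⟩ = 0 := by
                  have := IH (i : ℕ) h4 (h4.trans hm)
                  convert this using 2
                have hne : (⟨(i, j), hq⟩ : {q : Fin d × Fin d // q.1 ≤ q.2}) ≠ q0 := by
                  simp only [hq0, ne_eq, Subtype.mk.injEq, Prod.mk.injEq, not_and]
                  intro hi hij
                  have := congrArg Fin.val hi
                  simp at this
                  omega
                rw [if_neg hne, hcq, zero_mul]
              · by_cases h5 : (i : ℕ) = m
                · have heq : (⟨(i, j), hq⟩ : {q : Fin d × Fin d // q.1 ≤ q.2}) = q0 := by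
                    exact Subtype.ext (Prod.ext_iff.mpr ⟨Fin.ext h5, rfl⟩)
                  rw [if_pos heq]
                  have hieq : i = (⟨m, hm.trans j.isLt⟩ : Fin d) := Fin.ext h5
                  simp only [trivFlex, if_neg h1, if_neg h2, ← hieq]
                  simp
                · have hi : m + 1 ≤ (i : ℕ) := by omega
                  have hne : (⟨(i, j), hq⟩ : {q : Fin d × Fin d // q.1 ≤ q.2}) ≠ q0 := by
                    simp only [hq0, ne_eq, Subtype.mk.injEq, Prod.mk.injEq, not_and]
                    intro hi2 hij
                    have := congrArg Fin.val hi2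
                    simp at this
                    omega
                  rw [if_neg hne]
                  simp [trivFlex, h1, h2, hpin i hi]
            · have hne : (⟨(i, i'), hq⟩ : {q : Fin d × Fin d // q.1 ≤ q.2}) ≠ q0 := by
                simp only [hq0, ne_eq, Subtype.mk.injEq, Prod.mk.injEq, not_and]
                intro hi hij
                exact absurd hij.symm h3
              rw [if_neg hne]
              simp [trivFlex, h1, h2, h3]
      rw [Finset.sum_congr rfl fun q _ => key q, Finset.sum_ite_eq' Finset.univ] at hckj
      simp only [Finset.mem_univ, if_pos, neg_eq_zero] at hckj
      have hnz := nondegen v p hp haff m hk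
      have := mul_eq_zero.mp hckj
      rcases this with h | h
      · exact h
      · exact absurd h hnz
  funext q
  obtain ⟨⟨i, i'⟩, hq⟩ := q
  rcases eq_or_lt_of_le hq with h | h
  · have : i = i' := h
    subst this
    exact htrans i
  · exact hrot i' (i : ℕ) h




lemma cardP (d : ℕ) :
    Fintype.card {q : Fin d × Fin d // q.1 ≤ q.2} = (d + 1).choose 2 := by
  have e : {q : Fin d × Fin d // q.1 ≤ q.2} ≃ Σ j : Fin d, Fin ((j : ℕ) + 1) :=
    { toFun := fun q => ⟨q.1.2, ⟨(q.1.1 : ℕ), by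
        have := Fin.le_def.mp q.2; omega⟩⟩
      invFun := fun s => ⟨(⟨(s.2 : ℕ), by
          have h1 := s.2.isLt; have h2 := s.1.isLt; omega⟩, s.1),
        by rw [Fin.le_def]; exact Nat.lt_succ_iff.mp s.2.isLt⟩
      left_inv := by rintro ⟨⟨i, j⟩, h⟩; rfl
      right_inv := by rintro ⟨j, r⟩; rfl }
  rw [Fintype.card_congr e, Fintype.card_sigma]
  simp only [Fintype.card_fin]
  rw [Fin.sum_univ_eq_sum_range (fun i => i + 1) d]
  have h : ∑ i ∈ Finset.range d, (i + 1) = ∑ i ∈ Finset.range (d + 1), i := by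
    rw [Finset.sum_range_succ']
    simp
  rw [h, Finset.sum_range_id, Nat.choose_two_right]

lemma cardB {V : Type*} [DecidableEq V] [Fintype V] {d : ℕ} (v : Fin d → V)
    (hv : Function.Injective v) :
    Fintype.card {vi : V × Fin d // ∃ k : Fin d, vi.1 = v k ∧ k ≤ vi.2} =
      (d + 1).choose 2 := by
  rw [← cardP d]
  apply Fintype.card_congr
  refine (Equiv.ofBijective (fun q : {q : Fin d × Fin d // q.1 ≤ q.2} =>
    (⟨(v q.1.1, q.1.2), ⟨q.1.1, rfl, q.2⟩⟩ :
      {vi : V × Fin d // ∃ k : Fin d, vi.1 = v k ∧ k ≤ vi.2})) ⟨?_, ?_⟩).symm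
  · rintro ⟨⟨i, j⟩, h⟩ ⟨⟨i', j'⟩, h'⟩ hEq
    simp only [Subtype.mk.injEq, Prod.mk.injEq] at hEq
    exact Subtype.ext (Prod.ext_iff.mpr ⟨hv hEq.1, hEq.2⟩)
  · rintro ⟨⟨x, j⟩, ⟨k, hk1, hk2⟩⟩
    exact ⟨⟨(k, j), hk2⟩, Subtype.ext (Prod.ext_iff.mpr ⟨hk1.symm, rfl⟩)⟩

lemma submatrix_mulVecLin {V : Type*} [Fintype V] [DecidableEq V] {d : ℕ}
    (v : Fin d → V) {m : Type*} (A : Matrix m (V × Fin d) ℂ) :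
    (A.submatrix id
        (fun c : {vi : V × Fin d // ¬∃ k : Fin d, vi.1 = v k ∧ k ≤ vi.2} => c.1)).mulVecLin
      = A.mulVecLin ∘ₗ extCols v := by
  apply LinearMap.ext
  intro x
  funext e
  simp only [Matrix.mulVecLin_apply, LinearMap.comp_apply, Matrix.mulVec, dotProduct,
    Matrix.submatrix_apply, id_eq]
  rw [← Fintype.sum_subtype_add_sum_subtype
      (fun vi : V × Fin d => ∃ k : Fin d, vi.1 = v k ∧ k ≤ vi.2)
      (fun vi => A e vi * extCols v x vi)]
  have h1 : ∀ b : {vi : V × Fin d // ∃ k : Fin d, vi.1 = v k ∧ k ≤ vi.2},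
      A e b.1 * extCols v x b.1 = 0 := by
    intro b
    have : extCols v x b.1 = 0 := by
      simp only [extCols, LinearMap.coe_mk, AddHom.coe_mk]
      rw [dif_pos b.2]
    rw [this, mul_zero]
  have h2 : ∀ cc : {vi : V × Fin d // ¬∃ k : Fin d, vi.1 = v k ∧ k ≤ vi.2},
      A e cc.1 * extCols v x cc.1 = A e cc.1 * x cc := by
    intro cc
    congr 1
    simp only [extCols, LinearMap.coe_mk, AddHom.coe_mk]
    rw [dif_neg cc.2]
  rw [Finset.sum_congr rfl fun b _ => h1 b, Finset.sum_congr rfl fun cc _ => h2 cc]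
  simp


end Aux18

/-- For `p ∈ X_{G,d}` with `p(v 0), …, p(v (d-1))` affinely
independent, the pinned rigidity matrix (the rigidity matrix with the columns
`(j, v k)`, `k ≤ j`, deleted) has rank `d·|V| - (d+1 choose 2)` iff `(G,p)` is
infinitesimally rigid. -/
theorem stmt_18 {V : Type*} [Fintype V] [DecidableEq V] {d : ℕ} (hd : 1 ≤ d)
    (G : SimpleGraph V) (hcard : d + 1 ≤ Fintype.card V)
    (v : Fin d → V) (hv : Function.Injective v)
    (p : V → Fin d → ℂ) (hp : Pinned v p)
    (haff : AffineIndependent ℂ (fun i => p (v i))) :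
    ((rigidityMatrix G p).submatrix id
        (fun c : {vi : V × Fin d // ¬∃ k : Fin d, vi.1 = v k ∧ k ≤ vi.2} => c.1)).rank =
      d * Fintype.card V - (d + 1).choose 2 ↔ IsInfRigid G p := by
  classical
  unfold IsInfRigid
  have hmul : d * Fintype.card V = Fintype.card V * d := Nat.mul_comm _ _
  rw [hmul]
  have hCle : (d + 1).choose 2 ≤ Fintype.card V * d := by
    rw [← cardB v hv]
    calc Fintype.card {vi : V × Fin d // ∃ k : Fin d, vi.1 = v k ∧ k ≤ vi.2}
        ≤ Fintype.card (V × Fin d) := Fintype.card_subtype_le _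
      _ = Fintype.card V * d := by rw [Fintype.card_prod, Fintype.card_fin]
  have hsub := submatrix_mulVecLin v (rigidityMatrix G p)
  -- the flex map properties
  have hΦrange : LinearMap.range (flexMap p (V := V)) ≤
      LinearMap.ker (rigidityMatrix G p).mulVecLin := by
    rintro _ ⟨c, rfl⟩
    rw [LinearMap.mem_ker]
    have hc : flexMap p c =
        ∑ q : {q : Fin d × Fin d // q.1 ≤ q.2}, c q • trivFlex p q.1 := rfl
    rw [hc, map_sum]
    refine Finset.sum_eq_zero fun q _ => ?_
    rw [map_smul]
    have h0 : (rigidityMatrix G p).mulVecLin (trivFlex p q.1) = 0 := by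
      rw [Matrix.mulVecLin_apply]
      exact flex_ker G p q.1
    rw [h0, smul_zero]
  have hΦinj : Function.Injective (flexMap p (V := V)) := by
    rw [← LinearMap.ker_eq_bot, LinearMap.ker_eq_bot']
    intro c hc0
    exact flex_inj hd v p hp haff c fun k j hkj => by rw [hc0]; rfl
  have hrangeΦ : Module.finrank ℂ (LinearMap.range (flexMap p (V := V))) =
      (d + 1).choose 2 := by
    rw [LinearMap.finrank_range_of_inj hΦinj, Module.finrank_pi, cardP]
  have hkerge : (d + 1).choose 2 ≤
      Module.finrank ℂ (LinearMap.ker (rigidityMatrix G p).mulVecLin) := by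
    rw [← hrangeΦ]
    exact Submodule.finrank_mono hΦrange
  have hRN : (rigidityMatrix G p).rank +
      Module.finrank ℂ (LinearMap.ker (rigidityMatrix G p).mulVecLin) =
        Fintype.card V * d := by
    have h := LinearMap.finrank_range_add_finrank_ker (rigidityMatrix G p).mulVecLin
    rwa [Module.finrank_pi, Fintype.card_prod, Fintype.card_fin] at h
  have hrankM : ((rigidityMatrix G p).submatrix id
      (fun c : {vi : V × Fin d // ¬∃ k : Fin d, vi.1 = v k ∧ k ≤ vi.2} => c.1)).rank =
      Module.finrank ℂ (LinearMap.range ((rigidityMatrix G p).submatrix id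
        (fun c : {vi : V × Fin d // ¬∃ k : Fin d, vi.1 = v k ∧ k ≤ vi.2} => c.1)).mulVecLin) :=
    rfl
  constructor
  · intro hM
    have hle : ((rigidityMatrix G p).submatrix id
        (fun c : {vi : V × Fin d // ¬∃ k : Fin d, vi.1 = v k ∧ k ≤ vi.2} => c.1)).rank ≤
        (rigidityMatrix G p).rank := by
      rw [hrankM]
      have hr : LinearMap.range ((rigidityMatrix G p).submatrix id
          (fun c : {vi : V × Fin d // ¬∃ k : Fin d, vi.1 = v k ∧ k ≤ vi.2} => c.1)).mulVecLin ≤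
          LinearMap.range (rigidityMatrix G p).mulVecLin := by
        rw [hsub]
        exact LinearMap.range_comp_le_range _ _
      exact Submodule.finrank_mono hr
    omega
  · intro hR
    have hker : Module.finrank ℂ (LinearMap.ker (rigidityMatrix G p).mulVecLin) =
        (d + 1).choose 2 := by omega
    have hT : LinearMap.range (flexMap p (V := V)) =
        LinearMap.ker (rigidityMatrix G p).mulVecLin :=
      Submodule.eq_of_le_of_finrank_le hΦrange (by rw [hker, hrangeΦ])
    have hkg : LinearMap.ker ((rigidityMatrix G p).submatrix id
        (fun c : {vi : V × Fin d // ¬∃ k : Fin d, vi.1 = v k ∧ k ≤ vi.2} => c.1)).mulVecLin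
        = ⊥ := by
      rw [LinearMap.ker_eq_bot']
      intro x hx
      have hfx : extCols v x ∈ LinearMap.ker (rigidityMatrix G p).mulVecLin := by
        rw [LinearMap.mem_ker]
        have hgx : ((rigidityMatrix G p).submatrix id
            (fun c : {vi : V × Fin d // ¬∃ k : Fin d, vi.1 = v k ∧ k ≤ vi.2} => c.1)).mulVecLin x
            = (rigidityMatrix G p).mulVecLin (extCols v x) := by
          rw [hsub]; rfl
        rw [← hgx, hx]
      rw [← hT] at hfx
      obtain ⟨c, hcx⟩ := hfx
      have hc0 : c = 0 := by
        refine flex_inj hd v p hp haff c fun k j hkj => ?_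
        rw [hcx]
        show extCols v x (v k, j) = 0
        simp only [extCols, LinearMap.coe_mk, AddHom.coe_mk]
        rw [dif_pos ⟨k, rfl, hkj⟩]
      have hx0 : extCols v x = 0 := by rw [← hcx, hc0, map_zero]
      funext cc
      have hcc := congrFun hx0 cc.1
      simp only [extCols, LinearMap.coe_mk, AddHom.coe_mk, Pi.zero_apply] at hcc
      rw [dif_neg cc.2] at hcc
      exact hcc
    have hRNg := LinearMap.finrank_range_add_finrank_ker
      ((rigidityMatrix G p).submatrix id
        (fun c : {vi : V × Fin d // ¬∃ k : Fin d, vi.1 = v k ∧ k ≤ vi.2} => c.1)).mulVecLin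
    rw [hkg, finrank_bot, Module.finrank_pi, add_zero] at hRNg
    have hcardK : Fintype.card {vi : V × Fin d // ¬∃ k : Fin d, vi.1 = v k ∧ k ≤ vi.2} =
        Fintype.card V * d - (d + 1).choose 2 := by
      rw [Fintype.card_subtype_compl, Fintype.card_prod, Fintype.card_fin, cardB v hv]
    omega


end RigidityPaper
end
end
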